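/- arXiv:2109.06254 — 4 statements merged into one kernel-verified Lean document; each statement's English description precedes it below -/
import Mathlib

section
/- The r-th raw moment of the Rayleigh Lomax distribution is E[X^r] = Σ_{h=0}^{r} C(r,h) θ^h (2/β)^{h/(2λ)} (−θ)^{r−h} Γ(h/(2λ) + 1), where X has cdf K(x) = 1 − exp(−(β/2)(θ/(θ+x))^{−2λ}) for x ≥ −θ. -/
open MeasureTheory Real Set

lemma integrableOn_aux {p q b : ℝ} (hp : 0 < p) (hq : -1 < q) (hb : 0 < b) :
    IntegrableOn (fun t : ℝ => t ^ q * Real.exp (-b * t ^ p)) (Set.Ioi 0) := by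
  have base : IntegrableOn (fun y : ℝ => y ^ ((q + 1) / p - 1) * Real.exp (-b * y)) (Set.Ioi 0) := by
    have hs : (-1 : ℝ) < (q + 1) / p - 1 := by
      have : 0 < (q + 1) / p := div_pos (by linarith) hp
      linarith
    have := integrableOn_rpow_mul_exp_neg_mul_rpow hs zero_lt_one hb
    simpa [Real.rpow_one] using this
  have key := (integrableOn_Ioi_comp_rpow_iff'
    (fun y : ℝ => y ^ ((q + 1) / p - 1) * Real.exp (-b * y)) hp.ne').mpr base
  refine (integrableOn_congr_fun (fun t ht => ?_) measurableSet_Ioi).mp key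
  have ht' : (0:ℝ) < t := ht
  have h1 : ((t : ℝ) ^ p) ^ ((q + 1) / p - 1) = t ^ (q + 1 - p) := by
    rw [← Real.rpow_mul ht'.le]
    congr 1
    field_simp
  rw [smul_eq_mul, h1, ← mul_assoc, ← Real.rpow_add ht']
  ring_nf

/-- r-th raw moment of the Rayleigh Lomax distribution. -/
theorem rayleigh_lomax_raw_moment
    {Ω : Type*} [MeasurableSpace Ω] (μ : Measure Ω) [IsProbabilityMeasure μ]
    (X : Ω → ℝ) (hX : Measurable X)
    (θ lam β : ℝ) (hθ : 0 < θ) (hlam : 0 < lam) (hβ : 0 < β)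
    (hsurv : ∀ x : ℝ, -θ ≤ x →
      μ {ω | x < X ω} = ENNReal.ofReal (exp (-(β / 2) * ((θ + x) / θ) ^ (2 * lam))))
    (hsupp : ∀ᵐ ω ∂μ, -θ ≤ X ω)
    (r : ℕ)
    (hint : Integrable (fun ω => X ω ^ r) μ) :
    ∫ ω, X ω ^ r ∂μ
      = ∑ h ∈ Finset.range (r + 1),
          (r.choose h : ℝ) * θ ^ h * (2 / β) ^ ((h : ℝ) / (2 * lam)) *
            (-θ) ^ (r - h) * Real.Gamma ((h : ℝ) / (2 * lam) + 1) := by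
  set p : ℝ := 2 * lam with hp_def
  have hp : 0 < p := by positivity
  set b : ℝ := β / 2 * θ ^ (-p) with hb_def
  have hb : 0 < b := by positivity
  set Y : Ω → ℝ := fun ω => θ + X ω with hY_def
  have hYm : Measurable Y := measurable_const.add hX
  have hYnn : ∀ᵐ ω ∂μ, 0 ≤ Y ω := by
    filter_upwards [hsupp] with ω hω
    simp only [hY_def]; linarith
  -- survival function of Y
  have hYsurv : ∀ t : ℝ, 0 < t →
      μ {ω | t < Y ω} = ENNReal.ofReal (exp (-b * t ^ p)) := by
    intro t ht
    have h1 : {ω | t < Y ω} = {ω | t - θ < X ω} := by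
      ext ω; simp only [hY_def, Set.mem_setOf_eq]
      constructor <;> intro <;> linarith
    rw [h1, hsurv (t - θ) (by linarith)]
    congr 2
    have h2 : θ + (t - θ) = t := by ring
    rw [h2]
    have h3 : (t / θ) ^ p = t ^ p * θ ^ (-p) := by
      rw [Real.div_rpow ht.le hθ.le, Real.rpow_neg hθ.le, div_eq_mul_inv]
    rw [h3, hb_def]
    ring
  -- the key lintegral computation for positive powers
  have key : ∀ n : ℕ,
      ∫⁻ ω, ENNReal.ofReal (Y ω ^ (n + 1)) ∂μ
        = ENNReal.ofReal (∫ t in Set.Ioi (0:ℝ),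
            Real.exp (-b * t ^ p) * ((n + 1 : ℝ) * t ^ n)) := by
    intro n
    have g_intble : ∀ t > (0:ℝ), IntervalIntegrable
        (fun s : ℝ => (n + 1 : ℝ) * s ^ n) volume 0 t := fun t _ =>
      (continuous_const.mul (continuous_pow n)).intervalIntegrable 0 t
    have g_nn : ∀ᵐ t ∂(volume.restrict (Set.Ioi (0:ℝ))),
        0 ≤ (n + 1 : ℝ) * t ^ n := by
      filter_upwards [ae_restrict_mem measurableSet_Ioi] with t ht
      have : (0:ℝ) < t := ht
      positivity
    have lhs_eq : ∀ ω, ENNReal.ofReal (Y ω ^ (n + 1))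
        = ENNReal.ofReal (∫ s in (0:ℝ)..(Y ω), (n + 1 : ℝ) * s ^ n) := by
      intro ω
      congr 1
      rw [intervalIntegral.integral_const_mul, integral_pow]
      field_simp
      simp
    simp_rw [lhs_eq]
    rw [lintegral_comp_eq_lintegral_meas_lt_mul μ hYnn hYm.aemeasurable g_intble g_nn]
    have intble : IntegrableOn
        (fun t : ℝ => Real.exp (-b * t ^ p) * ((n + 1 : ℝ) * t ^ n)) (Set.Ioi 0) := by
      have h0 := integrableOn_aux hp (by
        have : (-1:ℝ) < 0 := by norm_num
        exact lt_of_lt_of_le this (by positivity : (0:ℝ) ≤ (n:ℝ))) hb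
      have := (h0.const_mul ((n:ℝ)+1))
      refine (integrableOn_congr_fun (fun t ht => ?_) measurableSet_Ioi).mp this
      have ht' : (0:ℝ) < t := ht
      rw [Real.rpow_natCast]
      ring
    have nn : 0 ≤ᵐ[volume.restrict (Set.Ioi (0:ℝ))]
        (fun t : ℝ => Real.exp (-b * t ^ p) * ((n + 1 : ℝ) * t ^ n)) := by
      filter_upwards [ae_restrict_mem measurableSet_Ioi] with t ht
      have : (0:ℝ) < t := ht
      positivity
    rw [MeasureTheory.ofReal_integral_eq_lintegral_ofReal intble nn]
    apply setLIntegral_congr_fun measurableSet_Ioi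
    intro t ht
    beta_reduce
    rw [hYsurv t ht, ← ENNReal.ofReal_mul (Real.exp_pos _).le]
  -- the value of the integral
  have val : ∀ n : ℕ,
      ∫ t in Set.Ioi (0:ℝ), Real.exp (-b * t ^ p) * ((n + 1 : ℝ) * t ^ n)
        = θ ^ (n+1) * (2 / β) ^ (((n:ℝ)+1) / p) * Real.Gamma (((n:ℝ)+1) / p + 1) := by
    intro n
    have step1 : ∫ t in Set.Ioi (0:ℝ), Real.exp (-b * t ^ p) * ((n + 1 : ℝ) * t ^ n)
        = ((n:ℝ)+1) * ∫ t in Set.Ioi (0:ℝ), t ^ ((n:ℝ)) * Real.exp (-b * t ^ p) := by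
      rw [← integral_const_mul]
      apply setIntegral_congr_fun measurableSet_Ioi
      intro t ht
      have ht' : (0:ℝ) < t := ht
      simp only [Real.rpow_natCast]
      ring
    rw [step1, integral_rpow_mul_exp_neg_mul_rpow hp
      (by exact lt_of_lt_of_le (by norm_num) (by positivity : (0:ℝ) ≤ (n:ℝ))) hb]
    have hq : ((n:ℝ) + 1) / p ≠ 0 := by positivity
    have hgamma : Real.Gamma (((n:ℝ)+1) / p + 1)
        = (((n:ℝ)+1) / p) * Real.Gamma (((n:ℝ)+1) / p) := Real.Gamma_add_one hq
    have hbpow : b ^ (-((n:ℝ) + 1) / p) = θ ^ (n+1) * (2 / β) ^ (((n:ℝ)+1) / p) := by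
      rw [hb_def, Real.mul_rpow (by positivity) (by positivity),
        ← Real.rpow_natCast θ (n+1), ← Real.rpow_mul hθ.le]
      have h2 : -p * (-((n:ℝ) + 1) / p) = ((n:ℝ)+1) := by
        field_simp
      rw [h2]
      have h3 : (β / 2 : ℝ) ^ (-((n:ℝ) + 1) / p) = (2 / β) ^ (((n:ℝ)+1) / p) := by
        rw [show (2 / β : ℝ) = (β / 2)⁻¹ from (inv_div β 2).symm,
          Real.inv_rpow (by positivity), ← Real.rpow_neg (by positivity)]
        congr 1
        ring
      rw [h3, mul_comm]
      congr 2
      push_cast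
      ring
    rw [hgamma, hbpow]
    push_cast
    ring
  -- moments of Y
  have Mval : ∀ h : ℕ, Integrable (fun ω => Y ω ^ h) μ ∧
      ∫ ω, Y ω ^ h ∂μ
        = θ ^ h * (2 / β) ^ ((h : ℝ) / p) * Real.Gamma ((h : ℝ) / p + 1) := by
    intro h
    cases h with
    | zero =>
      constructor
      · simpa using integrable_const (1 : ℝ)
      · simp [Real.Gamma_one]
    | succ n =>
      have hInt : Integrable (fun ω => Y ω ^ (n + 1)) μ := by
        refine ⟨(hYm.pow_const _).aestronglyMeasurable, ?_⟩
        rw [hasFiniteIntegral_iff_ofReal (by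
          filter_upwards [hYnn] with ω hω
          positivity)]
        rw [key n]
        exact ENNReal.ofReal_lt_top
      refine ⟨hInt, ?_⟩
      have nn : 0 ≤ᵐ[μ] fun ω => Y ω ^ (n + 1) := by
        filter_upwards [hYnn] with ω hω
        positivity
      have hGpos : 0 < Real.Gamma (((n : ℝ) + 1) / p + 1) :=
        Real.Gamma_pos_of_pos (by positivity)
      rw [integral_eq_lintegral_of_nonneg_ae nn (hYm.pow_const _).aestronglyMeasurable,
        key n, val n, ENNReal.toReal_ofReal (by positivity)]
      push_cast
      ring
  -- final assembly
  have step : ∫ ω, X ω ^ r ∂μ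
      = ∫ ω, (∑ h ∈ Finset.range (r + 1),
          Y ω ^ h * (-θ) ^ (r - h) * (r.choose h : ℝ)) ∂μ := by
    congr 1
    funext ω
    rw [← add_pow]
    congr 1
    simp [hY_def]
  rw [step, integral_finset_sum _ (fun h _ => ((Mval h).1.mul_const _).mul_const _)]
  refine Finset.sum_congr rfl (fun h _ => ?_)
  rw [integral_mul_const, integral_mul_const, (Mval h).2]
  ring
end

section
/- The mean of the Rayleigh Lomax distribution is E[X] = θ(2/β)^{1/(2λ)} Γ(1/(2λ) + 1) − θ. -/
open MeasureTheory Real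

/-!
The normalized variable `(X + θ) / θ` is nonnegative with Weibull tail `exp (-(β / 2) t ^ (2λ))`.
By the layer-cake formula its mean is `∫₀^∞ exp (-(β / 2) t ^ (2λ)) dt`, which the substitution
`u = (β / 2) t ^ (2λ)` turns into `(2 / β) ^ (1 / (2λ)) Γ (1 / (2λ) + 1)`.
-/

theorem integral_eq_of_meas_lt_eq_exp_neg_mul_rpow {α : Type*} [MeasurableSpace α]
    {μ : Measure α} {Y : α → ℝ} (hint : Integrable Y μ) (hnn : 0 ≤ᵐ[μ] Y)
    {b p : ℝ} (hb : 0 < b) (hp : 0 < p)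
    (htail : ∀ t : ℝ, 0 < t → μ {ω | t < Y ω} = ENNReal.ofReal (exp (-b * t ^ p))) :
    ∫ ω, Y ω ∂μ = (1 / b) ^ (1 / p) * Gamma (1 / p + 1) := by
  rw [hint.integral_eq_integral_meas_lt hnn, one_div b, ← rpow_neg_eq_inv_rpow, ← neg_div,
    ← integral_exp_neg_mul_rpow hp hb]
  refine setIntegral_congr_fun measurableSet_Ioi fun t ht => ?_
  simp only [measureReal_def, htail t ht, ENNReal.toReal_ofReal (exp_nonneg _)]

theorem rayleigh_lomax_mean_general
    {Ω : Type*} [MeasurableSpace Ω] (μ : Measure Ω) [IsProbabilityMeasure μ]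
    (X : Ω → ℝ)
    (θ lam β : ℝ) (hθ : 0 < θ) (hlam : 0 < lam) (hβ : 0 < β)
    (hsurv : ∀ x : ℝ, -θ ≤ x →
      μ {ω | x < X ω} = ENNReal.ofReal (exp (-(β / 2) * ((θ + x) / θ) ^ (2 * lam))))
    (hsupp : ∀ᵐ ω ∂μ, -θ ≤ X ω)
    (hint : Integrable X μ) :
    ∫ ω, X ω ∂μ
      = θ * (2 / β) ^ (1 / (2 * lam)) * Real.Gamma (1 / (2 * lam) + 1) - θ := by
  set Y : Ω → ℝ := fun ω => (X ω + θ) / θ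
  have hY_int : Integrable Y μ := (hint.add (integrable_const θ)).div_const θ
  have hY_nn : 0 ≤ᵐ[μ] Y := by
    filter_upwards [hsupp] with ω hω
    exact div_nonneg (by linarith) hθ.le
  have hY_tail : ∀ t : ℝ, 0 < t →
      μ {ω | t < Y ω} = ENNReal.ofReal (exp (-(β / 2) * t ^ (2 * lam))) := by
    intro t ht
    have hset : {ω | t < Y ω} = {ω | θ * t - θ < X ω} := by
      ext ω
      simp only [Set.mem_ofPred_eq, Y, lt_div_iff₀ hθ]
      constructor <;> intro h <;> linarith
    rw [hset, hsurv _ (by nlinarith), show (θ + (θ * t - θ)) / θ = t by field_simp; ring]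
  have hY_mean : ∫ ω, Y ω ∂μ = (2 / β) ^ (1 / (2 * lam)) * Gamma (1 / (2 * lam) + 1) := by
    rw [integral_eq_of_meas_lt_eq_exp_neg_mul_rpow hY_int hY_nn (by positivity) (by positivity)
      hY_tail, one_div_div]
  have hY_integral : ∫ ω, Y ω ∂μ = (∫ ω, X ω ∂μ + θ) / θ := by
    rw [integral_div, integral_add hint (integrable_const θ), integral_const, probReal_univ,
      one_smul]
  rw [hY_integral, div_eq_iff hθ.ne'] at hY_mean
  linarith

/-- Mean of the Rayleigh Lomax distribution. -/
theorem rayleigh_lomax_mean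
    {Ω : Type*} [MeasurableSpace Ω] (μ : Measure Ω) [IsProbabilityMeasure μ]
    (X : Ω → ℝ) (hX : Measurable X)
    (θ lam β : ℝ) (hθ : 0 < θ) (hlam : 0 < lam) (hβ : 0 < β)
    (hsurv : ∀ x : ℝ, -θ ≤ x →
      μ {ω | x < X ω} = ENNReal.ofReal (exp (-(β / 2) * ((θ + x) / θ) ^ (2 * lam))))
    (hsupp : ∀ᵐ ω ∂μ, -θ ≤ X ω)
    (hint : Integrable X μ) :
    ∫ ω, X ω ∂μ
      = θ * (2 / β) ^ (1 / (2 * lam)) * Real.Gamma (1 / (2 * lam) + 1) - θ :=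
  rayleigh_lomax_mean_general μ X θ lam β hθ hlam hβ hsurv hsupp hint
end

section
/- The second raw moment of the Rayleigh Lomax distribution is E[X²] = θ²(2/β)^{1/λ} Γ(1/λ + 1) − 2θ²(2/β)^{1/(2λ)} Γ(1/(2λ) + 1) + θ². -/
open MeasureTheory Real Set

/-!
The shift `Y = X + θ` is nonnegative with Weibull tail `P(Y > t) = exp (-(β/2) (t/θ)^(2λ))`.
By the layer-cake formula `E[Y^p] = ∫₀^∞ p t^(p-1) P(Y > t) dt`, and the substitution `t = θ s`
turns this into a Gamma integral, giving `E[Y^p] = θ^p (2/β)^(p/(2λ)) Γ(p/(2λ) + 1)`.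
The theorem is then `E[X²] = E[Y²] - 2θ E[Y] + θ²`.
-/

theorem MeasureTheory.Integrable.integral_rpow_eq_integral_meas_lt_mul {α : Type*}
    [MeasurableSpace α] {μ : Measure α} {f : α → ℝ} (f_nn : 0 ≤ᵐ[μ] f) {p : ℝ} (hp : 0 < p)
    (hint : Integrable (fun ω => f ω ^ p) μ) :
    ∫ ω, f ω ^ p ∂μ = ∫ t in Ioi 0, p * t ^ (p - 1) * μ.real {a | t < f a} := by
  have hfp_nn : 0 ≤ᵐ[μ] fun ω => f ω ^ p := by
    filter_upwards [f_nn] with ω hω using rpow_nonneg hω p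
  rw [hint.integral_eq_integral_meas_lt hfp_nn, ← integral_comp_rpow_Ioi_of_pos hp]
  refine setIntegral_congr_fun measurableSet_Ioi fun t (ht : 0 < t) => ?_
  have hsets : {a | t ^ p < f a ^ p} =ᵐ[μ] {a | t < f a} := by
    filter_upwards [f_nn] with a ha
    exact propext (rpow_lt_rpow_iff ht.le ha hp)
  rw [smul_eq_mul, measureReal_congr hsets]

theorem integral_mul_rpow_sub_one_mul_exp_neg_mul_div_rpow {p q b θ : ℝ} (hp : 0 < p)
    (hq : 0 < q) (hb : 0 < b) (hθ : 0 < θ) :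
    ∫ t in Ioi 0, p * t ^ (p - 1) * exp (-b * (t / θ) ^ q)
      = θ ^ p * b⁻¹ ^ (p / q) * Gamma (p / q + 1) := by
  set g : ℝ → ℝ := fun s => p * s ^ (p - 1) * exp (-b * s ^ q)
  have hscale : ∀ t ∈ Ioi (0 : ℝ),
      p * t ^ (p - 1) * exp (-b * (t / θ) ^ q) = θ ^ (p - 1) * g (t * θ⁻¹) := by
    intro t (ht : 0 < t)
    simp only [g, ← div_eq_mul_inv, div_rpow ht.le hθ.le]
    field_simp
  have hg : ∫ s in Ioi 0, g s = b⁻¹ ^ (p / q) * Gamma (p / q + 1) := by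
    simp only [g, mul_assoc, integral_const_mul]
    rw [integral_rpow_mul_exp_neg_mul_rpow hq (by linarith) hb, sub_add_cancel,
      Gamma_add_one (div_pos hp hq).ne', neg_div, rpow_neg hb.le, inv_rpow hb.le]
    field_simp
  rw [setIntegral_congr_fun measurableSet_Ioi hscale, integral_const_mul,
    integral_comp_mul_right_Ioi g 0 (inv_pos.2 hθ), zero_mul, hg, smul_eq_mul, inv_inv,
    rpow_sub_one hθ.ne']
  field_simp

theorem integral_rpow_eq_of_meas_lt_eq_exp_neg_mul_div_rpow {Ω : Type*} [MeasurableSpace Ω]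
    {μ : Measure Ω} {Y : Ω → ℝ} {p q b θ : ℝ} (hp : 0 < p) (hq : 0 < q) (hb : 0 < b)
    (hθ : 0 < θ) (hY : 0 ≤ᵐ[μ] Y) (hint : Integrable (fun ω => Y ω ^ p) μ)
    (htail : ∀ t, 0 < t → μ {ω | t < Y ω} = ENNReal.ofReal (exp (-b * (t / θ) ^ q))) :
    ∫ ω, Y ω ^ p ∂μ = θ ^ p * b⁻¹ ^ (p / q) * Gamma (p / q + 1) := by
  rw [hint.integral_rpow_eq_integral_meas_lt_mul hY hp,
    ← integral_mul_rpow_sub_one_mul_exp_neg_mul_div_rpow hp hq hb hθ]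
  refine setIntegral_congr_fun measurableSet_Ioi fun t (ht : 0 < t) => ?_
  rw [measureReal_def, htail t ht, ENNReal.toReal_ofReal (exp_nonneg _)]

/-- Second raw moment of the Rayleigh Lomax distribution. -/
theorem rayleigh_lomax_second_moment
    {Ω : Type*} [MeasurableSpace Ω] (μ : Measure Ω) [IsProbabilityMeasure μ]
    (X : Ω → ℝ) (hX : Measurable X)
    (θ lam β : ℝ) (hθ : 0 < θ) (hlam : 0 < lam) (hβ : 0 < β)
    (hsurv : ∀ x : ℝ, -θ ≤ x →
      μ {ω | x < X ω} = ENNReal.ofReal (exp (-(β / 2) * ((θ + x) / θ) ^ (2 * lam))))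
    (hsupp : ∀ᵐ ω ∂μ, -θ ≤ X ω)
    (hint : Integrable (fun ω => X ω ^ 2) μ) :
    ∫ ω, X ω ^ 2 ∂μ
      = θ ^ 2 * (2 / β) ^ (1 / lam) * Real.Gamma (1 / lam + 1)
        - 2 * θ ^ 2 * (2 / β) ^ (1 / (2 * lam)) * Real.Gamma (1 / (2 * lam) + 1)
        + θ ^ 2 := by
  set Y : Ω → ℝ := fun ω => X ω + θ
  have hY_L2 : MemLp Y 2 μ :=
    ((memLp_two_iff_integrable_sq hX.aestronglyMeasurable).2 hint).add (memLp_const θ)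
  have hY_int : Integrable Y μ := hY_L2.integrable one_le_two
  have hY_nn : 0 ≤ᵐ[μ] Y := by
    filter_upwards [hsupp] with ω hω
    simp only [Y, Pi.zero_apply]
    linarith
  have hY_tail : ∀ t, 0 < t →
      μ {ω | t < Y ω} = ENNReal.ofReal (exp (-(β / 2) * (t / θ) ^ (2 * lam))) := by
    intro t ht
    simpa only [add_sub_cancel, sub_lt_iff_lt_add] using hsurv (t - θ) (by linarith)
  have hmoment := fun p hp hint' => integral_rpow_eq_of_meas_lt_eq_exp_neg_mul_div_rpow
    (p := p) hp (by positivity) (by positivity) hθ hY_nn hint' hY_tail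
  have hEY : ∫ ω, Y ω ∂μ = θ * (2 / β) ^ (1 / (2 * lam)) * Gamma (1 / (2 * lam) + 1) := by
    simpa only [rpow_one, inv_div] using hmoment 1 one_pos (by simpa only [rpow_one] using hY_int)
  have hEY2 : ∫ ω, Y ω ^ 2 ∂μ = θ ^ 2 * (2 / β) ^ (1 / lam) * Gamma (1 / lam + 1) := by
    have h := hmoment 2 two_pos (by simpa only [rpow_two] using hY_L2.integrable_sq)
    rw [show (2 : ℝ) / (2 * lam) = 1 / lam by field_simp] at h
    simpa only [rpow_two, inv_div] using h
  have hexpand : ∫ ω, X ω ^ 2 ∂μ = ∫ ω, Y ω ^ 2 ∂μ - 2 * θ * ∫ ω, Y ω ∂μ + θ ^ 2 := by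
    calc ∫ ω, X ω ^ 2 ∂μ = ∫ ω, (Y ω ^ 2 - 2 * θ * Y ω + θ ^ 2) ∂μ := by
          congr 1; funext ω; simp only [Y]; ring
      _ = _ := by
          rw [integral_add (f := fun ω => Y ω ^ 2 - 2 * θ * Y ω)
              (hY_L2.integrable_sq.sub (hY_int.const_mul _)) (integrable_const _),
            integral_sub hY_L2.integrable_sq (hY_int.const_mul _), integral_const_mul,
            integral_const, probReal_univ, one_smul]
  rw [hexpand, hEY, hEY2]
  ring
end

section
/- For a random variable X with survival function exp(−(β/2)((θ+x)/θ)^{2λ}) on [−θ,∞), the moment generating function expands as M(t) = Σ_{c=0}^∞ (t^c/c!) Σ_{j=0}^{c} C(c,j) θ^j (2/β)^{j/(2λ)} (−θ)^{c−j} Γ(j/(2λ)+1), provided all moments are finite and the series converges. -/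
open MeasureTheory Real Set
open scoped ENNReal Nat

/-!
If `W` is a standard exponential variable, `θ (2W/β)^{1/(2λ)} - θ` has exactly the survival
function of `X`, so the law of `X` is the image of `Exp(1)` under this map. Expanding
`(θ (2/β)^{1/(2λ)} W^{1/(2λ)} - θ)^c` binomially and using `E[W^s] = Γ(s+1)` identifies the
inner sums with the moments `E[X^c]`. Since `X ≥ -θ`, we have `|X|^c ≤ X^c + 2θ^c`, so the
convergence of the moment series makes `∑ E|tX|^c / c!` finite, and the exponential series can
be integrated term by term.
-/

lemma abs_pow_le_pow_add_two_mul_abs_pow {a y : ℝ} (hy : -a ≤ y) (c : ℕ) :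
    |y| ^ c ≤ y ^ c + 2 * |a| ^ c := by
  rcases le_or_gt 0 y with hy0 | hy0
  · rw [abs_of_nonneg hy0]
    linarith [pow_nonneg (abs_nonneg a) c]
  · have hya : |y| ^ c ≤ |a| ^ c :=
      pow_le_pow_left₀ (abs_nonneg y) (by rw [abs_of_neg hy0]; linarith [le_abs_self a]) c
    have hneg : -(|y| ^ c) ≤ y ^ c := by rw [← abs_pow]; exact neg_abs_le _
    linarith

section MomentSeries

variable {Ω : Type*} [MeasurableSpace Ω] {μ : Measure Ω} [IsFiniteMeasure μ] {Y : Ω → ℝ}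
  {a t : ℝ}

lemma integral_abs_pow_le_of_ae_ge (hYa : ∀ᵐ ω ∂μ, -a ≤ Y ω) {c : ℕ}
    (hmom : Integrable (fun ω => Y ω ^ c) μ) :
    ∫ ω, |Y ω| ^ c ∂μ ≤ ∫ ω, Y ω ^ c ∂μ + 2 * |a| ^ c * μ.real univ := by
  calc ∫ ω, |Y ω| ^ c ∂μ ≤ ∫ ω, (Y ω ^ c + 2 * |a| ^ c) ∂μ :=
        integral_mono_ae (by simpa only [abs_pow] using hmom.abs)
          (hmom.add (integrable_const _))
          (hYa.mono fun _ h => abs_pow_le_pow_add_two_mul_abs_pow h c)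
    _ = ∫ ω, Y ω ^ c ∂μ + 2 * |a| ^ c * μ.real univ := by
        rw [integral_add hmom (integrable_const _), integral_const, smul_eq_mul, mul_comm]

lemma summable_integral_norm_pow_div_factorial_mul_pow (hYa : ∀ᵐ ω ∂μ, -a ≤ Y ω)
    (hmom : ∀ c : ℕ, Integrable (fun ω => Y ω ^ c) μ)
    (hsum : Summable fun c : ℕ => t ^ c / c ! * ∫ ω, Y ω ^ c ∂μ) :
    Summable fun c : ℕ => ∫ ω, ‖t ^ c / c ! * Y ω ^ c‖ ∂μ := by
  refine .of_nonneg_of_le (fun c => integral_nonneg fun _ => norm_nonneg _) (fun c => ?_)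
    (hsum.abs.add ((Real.summable_pow_div_factorial (|t| * |a|)).mul_left (2 * μ.real univ)))
  have hcoef : |t ^ c / c !| * (2 * |a| ^ c * μ.real univ)
      = 2 * μ.real univ * ((|t| * |a|) ^ c / c !) := by
    rw [abs_div, abs_pow, Nat.abs_cast, mul_pow]; ring
  calc ∫ ω, ‖t ^ c / c ! * Y ω ^ c‖ ∂μ = |t ^ c / c !| * ∫ ω, |Y ω| ^ c ∂μ := by
        simp only [norm_mul, norm_pow, Real.norm_eq_abs, integral_const_mul]
    _ ≤ |t ^ c / c !| * (∫ ω, Y ω ^ c ∂μ + 2 * |a| ^ c * μ.real univ) :=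
        mul_le_mul_of_nonneg_left (integral_abs_pow_le_of_ae_ge hYa (hmom c)) (abs_nonneg _)
    _ ≤ |t ^ c / c ! * ∫ ω, Y ω ^ c ∂μ| + 2 * μ.real univ * ((|t| * |a|) ^ c / c !) := by
        rw [mul_add, hcoef, abs_mul]
        gcongr
        exact le_abs_self _

theorem integral_exp_mul_eq_tsum_moments (hYa : ∀ᵐ ω ∂μ, -a ≤ Y ω)
    (hmom : ∀ c : ℕ, Integrable (fun ω => Y ω ^ c) μ)
    (hsum : Summable fun c : ℕ => t ^ c / c ! * ∫ ω, Y ω ^ c ∂μ) :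
    ∫ ω, exp (t * Y ω) ∂μ = ∑' c : ℕ, t ^ c / c ! * ∫ ω, Y ω ^ c ∂μ := by
  have hexp : ∀ ω, exp (t * Y ω) = ∑' c : ℕ, t ^ c / c ! * Y ω ^ c := fun ω => by
    rw [exp_eq_exp_ℝ, NormedSpace.exp_eq_tsum_div]
    exact tsum_congr fun c => by ring
  simp_rw [hexp, ← integral_const_mul]
  exact (integral_tsum_of_summable_integral_norm (fun c => (hmom c).const_mul _)
    (summable_integral_norm_pow_div_factorial_mul_pow hYa hmom hsum)).symm

end MomentSeries

noncomputable def stdExpMeasure : Measure ℝ :=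
  (volume.restrict (Ioi 0)).withDensity fun w => ENNReal.ofReal (exp (-w))

namespace stdExpMeasure

lemma apply_eq_setLIntegral {s : Set ℝ} (hs : MeasurableSet s) :
    stdExpMeasure s = ∫⁻ w in s ∩ Ioi 0, ENNReal.ofReal (exp (-w)) := by
  rw [stdExpMeasure, withDensity_apply _ hs, Measure.restrict_restrict hs]

lemma apply_Ioi {a : ℝ} (ha : 0 ≤ a) : stdExpMeasure (Ioi a) = ENNReal.ofReal (exp (-a)) := by
  rw [apply_eq_setLIntegral measurableSet_Ioi, Ioi_inter_Ioi, max_eq_left ha,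
    ← ofReal_integral_eq_lintegral_ofReal, integral_exp_neg_Ioi]
  · simpa only [neg_mul, one_mul, IntegrableOn] using exp_neg_integrableOn_Ioi a one_pos
  · exact .of_forall fun _ => (exp_pos _).le

lemma apply_inter_Ioi_zero {s : Set ℝ} (hs : MeasurableSet s) :
    stdExpMeasure (s ∩ Ioi 0) = stdExpMeasure s := by
  rw [apply_eq_setLIntegral (hs.inter measurableSet_Ioi), apply_eq_setLIntegral hs,
    inter_assoc, inter_self]

instance : IsProbabilityMeasure stdExpMeasure :=
  ⟨by rw [← apply_inter_Ioi_zero MeasurableSet.univ, univ_inter, apply_Ioi le_rfl, neg_zero,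
    exp_zero, ENNReal.ofReal_one]⟩

lemma ae_pos : ∀ᵐ w ∂stdExpMeasure, 0 < w :=
  (withDensity_absolutelyContinuous _ _).ae_le (ae_restrict_mem measurableSet_Ioi)

lemma integral_eq_setIntegral (g : ℝ → ℝ) :
    ∫ w, g w ∂stdExpMeasure = ∫ w in Ioi 0, exp (-w) * g w := by
  rw [stdExpMeasure, integral_withDensity_eq_integral_toReal_smul
    (by fun_prop) (.of_forall fun _ => ENNReal.ofReal_lt_top)]
  simp only [ENNReal.toReal_ofReal (exp_pos _).le, smul_eq_mul]

lemma integrable_iff_integrableOn {g : ℝ → ℝ} :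
    Integrable g stdExpMeasure ↔ IntegrableOn (fun w => exp (-w) * g w) (Ioi 0) := by
  rw [stdExpMeasure, integrable_withDensity_iff_integrable_smul' (by fun_prop)
    (.of_forall fun _ => ENNReal.ofReal_lt_top)]
  simp only [ENNReal.toReal_ofReal (exp_pos _).le, smul_eq_mul, IntegrableOn]

lemma integrable_rpow {s : ℝ} (hs : -1 < s) : Integrable (fun w => w ^ s) stdExpMeasure := by
  rw [integrable_iff_integrableOn]
  simpa using GammaIntegral_convergent (s := s + 1) (by linarith)

lemma integral_rpow {s : ℝ} (hs : -1 < s) : ∫ w, w ^ s ∂stdExpMeasure = Gamma (s + 1) := by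
  rw [integral_eq_setIntegral, Gamma_eq_integral (by linarith), add_sub_cancel_right]

lemma integral_mul_rpow_add_pow {p : ℝ} (hp : 0 ≤ p) (A B : ℝ) (c : ℕ) :
    ∫ w, (A * w ^ p + B) ^ c ∂stdExpMeasure
      = ∑ j ∈ Finset.range (c + 1), A ^ j * B ^ (c - j) * c.choose j * Gamma (p * j + 1) := by
  have hexpand : (fun w => (A * w ^ p + B) ^ c) =ᵐ[stdExpMeasure]
      fun w => ∑ j ∈ Finset.range (c + 1), A ^ j * B ^ (c - j) * c.choose j * w ^ (p * j) := by
    filter_upwards [ae_pos] with w hw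
    rw [add_pow]
    refine Finset.sum_congr rfl fun j _ => ?_
    rw [mul_pow, ← rpow_natCast (w ^ p), ← rpow_mul hw.le]
    ring
  have hpj : ∀ j : ℕ, -1 < p * j := fun j => by have := mul_nonneg hp j.cast_nonneg; linarith
  rw [integral_congr_ae hexpand,
    integral_finsetSum _ fun j _ => (integrable_rpow (hpj j)).const_mul _]
  exact Finset.sum_congr rfl fun j _ => by rw [integral_const_mul, integral_rpow (hpj j)]

end stdExpMeasure

theorem MeasureTheory.Measure.ext_of_Ioi {α : Type*} [TopologicalSpace α] [MeasurableSpace α]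
    [SecondCountableTopology α] [LinearOrder α] [OrderTopology α] [BorelSpace α]
    (μ ν : Measure α) [IsProbabilityMeasure μ] [IsProbabilityMeasure ν]
    (h : ∀ a, μ (Ioi a) = ν (Ioi a)) : μ = ν :=
  ext_of_Iic μ ν fun a => by
    rw [← compl_Ioi, prob_compl_eq_one_sub measurableSet_Ioi,
      prob_compl_eq_one_sub measurableSet_Ioi, h]

section RayleighLomax

variable {θ lam β : ℝ}

noncomputable def rayleighLomaxOfExp (θ lam β w : ℝ) : ℝ :=
  θ * (2 * w / β) ^ (2 * lam)⁻¹ - θ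

lemma measurable_rayleighLomaxOfExp : Measurable (rayleighLomaxOfExp θ lam β) := by
  unfold rayleighLomaxOfExp; fun_prop

lemma lt_rayleighLomaxOfExp_iff (hθ : 0 < θ) (hlam : 0 < lam) (hβ : 0 < β) {x w : ℝ}
    (hx : -θ ≤ x) (hw : 0 ≤ w) :
    x < rayleighLomaxOfExp θ lam β w ↔ β / 2 * ((θ + x) / θ) ^ (2 * lam) < w := by
  have hx' : 0 ≤ (θ + x) / θ := div_nonneg (by linarith) hθ.le
  calc x < rayleighLomaxOfExp θ lam β w ↔ (θ + x) / θ < (2 * w / β) ^ (2 * lam)⁻¹ := by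
        rw [rayleighLomaxOfExp, div_lt_iff₀ hθ]; constructor <;> intro <;> linarith
    _ ↔ ((θ + x) / θ) ^ (2 * lam) < 2 * w / β :=
        lt_rpow_inv_iff_of_pos hx' (by positivity) (by positivity)
    _ ↔ β / 2 * ((θ + x) / θ) ^ (2 * lam) < w := by
        rw [lt_div_iff₀ hβ]; constructor <;> intro <;> linarith

lemma stdExpMeasure_map_rayleighLomaxOfExp_Ioi (hθ : 0 < θ) (hlam : 0 < lam) (hβ : 0 < β)
    {x : ℝ} (hx : -θ ≤ x) :
    stdExpMeasure.map (rayleighLomaxOfExp θ lam β) (Ioi x)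
      = ENNReal.ofReal (exp (-(β / 2) * ((θ + x) / θ) ^ (2 * lam))) := by
  have hH : 0 ≤ β / 2 * ((θ + x) / θ) ^ (2 * lam) := by
    have : 0 ≤ (θ + x) / θ := div_nonneg (by linarith) hθ.le
    positivity
  have hpre : rayleighLomaxOfExp θ lam β ⁻¹' Ioi x ∩ Ioi 0
      = Ioi (β / 2 * ((θ + x) / θ) ^ (2 * lam)) := by
    ext w
    simp only [mem_inter_iff, mem_preimage, mem_Ioi]
    constructor
    · rintro ⟨hxw, hw⟩
      exact (lt_rayleighLomaxOfExp_iff hθ hlam hβ hx hw.le).1 hxw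
    · intro hw
      have hw0 : 0 < w := hH.trans_lt hw
      exact ⟨(lt_rayleighLomaxOfExp_iff hθ hlam hβ hx hw0.le).2 hw, hw0⟩
  rw [Measure.map_apply measurable_rayleighLomaxOfExp measurableSet_Ioi,
    ← stdExpMeasure.apply_inter_Ioi_zero (measurable_rayleighLomaxOfExp measurableSet_Ioi), hpre,
    stdExpMeasure.apply_Ioi hH, neg_mul]

lemma stdExpMeasure_map_rayleighLomaxOfExp_Ioi_of_lt (hθ : 0 < θ) (hβ : 0 < β) {x : ℝ}
    (hx : x < -θ) :
    stdExpMeasure.map (rayleighLomaxOfExp θ lam β) (Ioi x) = 1 := by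
  rw [Measure.map_apply measurable_rayleighLomaxOfExp measurableSet_Ioi]
  refine le_antisymm prob_le_one ?_
  calc (1 : ℝ≥0∞) = stdExpMeasure (Ioi 0) := by
        rw [stdExpMeasure.apply_Ioi le_rfl, neg_zero, exp_zero, ENNReal.ofReal_one]
    _ ≤ _ := measure_mono fun w (hw : 0 < w) => by
        have : 0 < θ * (2 * w / β) ^ (2 * lam)⁻¹ := by positivity
        change x < rayleighLomaxOfExp θ lam β w
        rw [rayleighLomaxOfExp]
        linarith

lemma integral_rayleighLomaxOfExp_pow (hlam : 0 < lam) (hβ : 0 < β) (c : ℕ) :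
    ∫ w, rayleighLomaxOfExp θ lam β w ^ c ∂stdExpMeasure
      = ∑ j ∈ Finset.range (c + 1),
          (c.choose j : ℝ) * θ ^ j * (2 / β) ^ ((j : ℝ) / (2 * lam)) *
            (-θ) ^ (c - j) * Gamma ((j : ℝ) / (2 * lam) + 1) := by
  have hform : (fun w => rayleighLomaxOfExp θ lam β w ^ c) =ᵐ[stdExpMeasure]
      fun w => (θ * (2 / β) ^ (2 * lam)⁻¹ * w ^ (2 * lam)⁻¹ + -θ) ^ c := by
    filter_upwards [stdExpMeasure.ae_pos] with w hw
    rw [rayleighLomaxOfExp, mul_div_right_comm, mul_rpow (by positivity) hw.le]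
    ring
  rw [integral_congr_ae hform, stdExpMeasure.integral_mul_rpow_add_pow (by positivity)]
  refine Finset.sum_congr rfl fun j _ => ?_
  rw [inv_mul_eq_div, mul_pow, ← rpow_natCast ((2 / β) ^ _), ← rpow_mul (by positivity),
    inv_mul_eq_div]
  ring

variable {Ω : Type*} [MeasurableSpace Ω] {μ : Measure Ω} {X : Ω → ℝ}

lemma measure_neg_lt_eq_one (hlam : 0 < lam)
    (hsurv : ∀ x : ℝ, -θ ≤ x →
      μ {ω | x < X ω} = ENNReal.ofReal (exp (-(β / 2) * ((θ + x) / θ) ^ (2 * lam)))) :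
    μ {ω | -θ < X ω} = 1 := by
  rw [hsurv (-θ) le_rfl, add_neg_cancel, zero_div, zero_rpow (by positivity), mul_zero,
    exp_zero, ENNReal.ofReal_one]

theorem map_eq_stdExpMeasure_map_rayleighLomaxOfExp [IsProbabilityMeasure μ] (hX : Measurable X)
    (hθ : 0 < θ) (hlam : 0 < lam) (hβ : 0 < β)
    (hsurv : ∀ x : ℝ, -θ ≤ x →
      μ {ω | x < X ω} = ENNReal.ofReal (exp (-(β / 2) * ((θ + x) / θ) ^ (2 * lam)))) :
    μ.map X = stdExpMeasure.map (rayleighLomaxOfExp θ lam β) := by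
  have := Measure.isProbabilityMeasure_map (μ := μ) hX.aemeasurable
  have := Measure.isProbabilityMeasure_map (μ := stdExpMeasure)
    (measurable_rayleighLomaxOfExp (θ := θ) (lam := lam) (β := β)).aemeasurable
  refine Measure.ext_of_Ioi _ _ fun x => ?_
  rw [Measure.map_apply hX measurableSet_Ioi]
  rcases le_or_gt (-θ) x with hx | hx
  · exact (hsurv x hx).trans (stdExpMeasure_map_rayleighLomaxOfExp_Ioi hθ hlam hβ hx).symm
  · rw [stdExpMeasure_map_rayleighLomaxOfExp_Ioi_of_lt hθ hβ hx]
    refine le_antisymm prob_le_one ?_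
    rw [← measure_neg_lt_eq_one hlam hsurv]
    exact measure_mono fun ω (h : -θ < X ω) => hx.trans h

end RayleighLomax

theorem rayleigh_lomax_mgf_series_general
    {Ω : Type*} [MeasurableSpace Ω] (μ : Measure Ω) [IsProbabilityMeasure μ]
    (X : Ω → ℝ) (hX : Measurable X)
    (θ lam β : ℝ) (hθ : 0 < θ) (hlam : 0 < lam) (hβ : 0 < β)
    (hsurv : ∀ x : ℝ, -θ ≤ x →
      μ {ω | x < X ω} = ENNReal.ofReal (exp (-(β / 2) * ((θ + x) / θ) ^ (2 * lam))))
    (t : ℝ)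
    (hmom : ∀ c : ℕ, Integrable (fun ω => X ω ^ c) μ)
    (hsum : Summable (fun c : ℕ =>
      t ^ c / (Nat.factorial c : ℝ) *
        ∑ j ∈ Finset.range (c + 1),
          (c.choose j : ℝ) * θ ^ j * (2 / β) ^ ((j : ℝ) / (2 * lam)) *
            (-θ) ^ (c - j) * Real.Gamma ((j : ℝ) / (2 * lam) + 1))) :
    ∫ ω, exp (t * X ω) ∂μ
      = ∑' c : ℕ,
          t ^ c / (Nat.factorial c : ℝ) *
            ∑ j ∈ Finset.range (c + 1),
              (c.choose j : ℝ) * θ ^ j * (2 / β) ^ ((j : ℝ) / (2 * lam)) *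
                (-θ) ^ (c - j) * Real.Gamma ((j : ℝ) / (2 * lam) + 1) := by
  have hmoments : ∀ c : ℕ, ∫ ω, X ω ^ c ∂μ = ∑ j ∈ Finset.range (c + 1),
      (c.choose j : ℝ) * θ ^ j * (2 / β) ^ ((j : ℝ) / (2 * lam)) *
        (-θ) ^ (c - j) * Gamma ((j : ℝ) / (2 * lam) + 1) := fun c => by
    rw [← integral_map (f := fun x : ℝ => x ^ c) hX.aemeasurable (by fun_prop),
      map_eq_stdExpMeasure_map_rayleighLomaxOfExp hX hθ hlam hβ hsurv,
      integral_map measurable_rayleighLomaxOfExp.aemeasurable (by fun_prop),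
      integral_rayleighLomaxOfExp_pow hlam hβ]
  have hsupp : ∀ᵐ ω ∂μ, -θ ≤ X ω := by
    have hlt : ∀ᵐ ω ∂μ, -θ < X ω := by
      rw [ae_iff_measure_eq (measurableSet_lt measurable_const hX).nullMeasurableSet,
        measure_neg_lt_eq_one hlam hsurv, measure_univ]
    exact hlt.mono fun _ => le_of_lt
  simp_rw [← hmoments] at hsum ⊢
  exact integral_exp_mul_eq_tsum_moments hsupp hmom hsum

/-- Series expansion of the mgf of the Rayleigh Lomax distribution. -/
theorem rayleigh_lomax_mgf_series
    {Ω : Type*} [MeasurableSpace Ω] (μ : Measure Ω) [IsProbabilityMeasure μ]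
    (X : Ω → ℝ) (hX : Measurable X)
    (θ lam β : ℝ) (hθ : 0 < θ) (hlam : 0 < lam) (hβ : 0 < β)
    (hsurv : ∀ x : ℝ, -θ ≤ x →
      μ {ω | x < X ω} = ENNReal.ofReal (exp (-(β / 2) * ((θ + x) / θ) ^ (2 * lam))))
    (hsupp : ∀ᵐ ω ∂μ, -θ ≤ X ω)
    (t : ℝ)
    (hmgf : Integrable (fun ω => exp (t * X ω)) μ)
    (hmom : ∀ c : ℕ, Integrable (fun ω => X ω ^ c) μ)
    (hsum : Summable (fun c : ℕ =>
      t ^ c / (Nat.factorial c : ℝ) *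
        ∑ j ∈ Finset.range (c + 1),
          (c.choose j : ℝ) * θ ^ j * (2 / β) ^ ((j : ℝ) / (2 * lam)) *
            (-θ) ^ (c - j) * Real.Gamma ((j : ℝ) / (2 * lam) + 1))) :
    ∫ ω, exp (t * X ω) ∂μ
      = ∑' c : ℕ,
          t ^ c / (Nat.factorial c : ℝ) *
            ∑ j ∈ Finset.range (c + 1),
              (c.choose j : ℝ) * θ ^ j * (2 / β) ^ ((j : ℝ) / (2 * lam)) *
                (-θ) ^ (c - j) * Real.Gamma ((j : ℝ) / (2 * lam) + 1) :=
  rayleigh_lomax_mgf_series_general μ X hX θ lam β hθ hlam hβ hsurv t hmom hsum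
end
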